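/- Let (B̃, B) be one of the pairs (diag(1,0), 0₂), (I₂, 0₂), or (I₂, diag(1,0)) of 2×2 complex matrices (so that the rank of B̃ exceeds the rank of B). If P ∈ GL₂(ℂ) and F is a 2×2 complex matrix with PᵀBP = B̃ + F, then ‖F‖ ≥ 1/2, where ‖·‖ is the entrywise maximum norm. -/

import Mathlib

/-!
In the first two cases `B = 0`, so `F = -B̃` has the entry `-1`. In the third, `B̃ + F = 1 + F`
is singular because `B` is. But if every entry of an `n × n` matrix `F` has modulus less than
`1/n`, its `ℓ∞` operator norm (maximal row sum) is less than `1`, so `1 + F` is invertible by the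
Neumann series.
-/

open Matrix

/-- The entrywise maximum norm `‖X‖ = max_{j,k} |x_{jk}|` on complex matrices. -/
noncomputable def maxNorm {n : ℕ} (X : Matrix (Fin n) (Fin n) ℂ) : ℝ :=
  ((Finset.univ.sup fun p : Fin n × Fin n => ‖X p.1 p.2‖₊ : NNReal) : ℝ)

lemma norm_entry_le_maxNorm {n : ℕ} (X : Matrix (Fin n) (Fin n) ℂ) (i j : Fin n) :
    ‖X i j‖ ≤ maxNorm X := by
  unfold maxNorm
  exact_mod_cast Finset.le_sup (f := fun p : Fin n × Fin n => ‖X p.1 p.2‖₊) (Finset.mem_univ (i, j))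

lemma one_le_maxNorm_of_add_eq_zero {n : ℕ} {B F : Matrix (Fin n) (Fin n) ℂ} {i j : Fin n}
    (hB : B i j = 1) (h : B + F = 0) : 1 ≤ maxNorm F := by
  have hF : F i j = -1 := by
    rw [← hB]
    exact eq_neg_of_add_eq_zero_right (congrFun (congrFun h i) j)
  simpa [hF] using norm_entry_le_maxNorm F i j

section LinftyOp

attribute [local instance] Matrix.linftyOpNormedAddCommGroup Matrix.linftyOpNormedRing
  Matrix.linftyOpNormedAlgebra

lemma linfty_opNorm_le_mul_maxNorm {n : ℕ} (X : Matrix (Fin n) (Fin n) ℂ) :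
    ‖X‖ ≤ n * maxNorm X := by
  rw [linfty_opNorm_def, maxNorm, ← NNReal.coe_natCast, ← NNReal.coe_mul, NNReal.coe_le_coe]
  refine Finset.sup_le fun i _ => ?_
  simpa using Finset.sum_le_card_nsmul Finset.univ _ _ fun j _ =>
    Finset.le_sup (f := fun p : Fin n × Fin n => ‖X p.1 p.2‖₊) (Finset.mem_univ (i, j))

lemma isUnit_one_add_of_maxNorm_lt {n : ℕ} {F : Matrix (Fin n) (Fin n) ℂ}
    (hF : maxNorm F < 1 / n) : IsUnit (1 + F) := by
  have hn : (0 : ℝ) < n := one_div_pos.mp ((NNReal.coe_nonneg _).trans_lt hF)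
  have hnorm : ‖-F‖ < 1 := by
    rw [norm_neg]
    calc ‖F‖ ≤ n * maxNorm F := linfty_opNorm_le_mul_maxNorm F
      _ < n * (1 / n) := by gcongr
      _ = 1 := by field_simp
  simpa using isUnit_one_sub_of_norm_lt_one hnorm

end LinftyOp

lemma one_div_le_maxNorm_of_det_one_add_eq_zero {n : ℕ} {F : Matrix (Fin n) (Fin n) ℂ}
    (hdet : (1 + F).det = 0) : 1 / (n : ℝ) ≤ maxNorm F := by
  by_contra! hlt
  exact ((isUnit_iff_isUnit_det _).mp (isUnit_one_add_of_maxNorm_lt hlt)).ne_zero hdet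

theorem rank_drop_perturbation_lower_bound_general
    (B' B : Matrix (Fin 2) (Fin 2) ℂ)
    (h : (B' = !![(1 : ℂ), 0; 0, 0] ∧ B = 0) ∨
         (B' = (1 : Matrix (Fin 2) (Fin 2) ℂ) ∧ B = 0) ∨
         (B' = (1 : Matrix (Fin 2) (Fin 2) ℂ) ∧ B = !![(1 : ℂ), 0; 0, 0]))
    (P F : Matrix (Fin 2) (Fin 2) ℂ)
    (heq : Pᵀ * B * P = B' + F) :
    (1 : ℝ) / 2 ≤ maxNorm F := by
  rcases h with ⟨rfl, rfl⟩ | ⟨rfl, rfl⟩ | ⟨rfl, rfl⟩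
  · have hsum : !![(1 : ℂ), 0; 0, 0] + F = 0 := by simpa using heq.symm
    have := one_le_maxNorm_of_add_eq_zero (i := 0) (j := 0) rfl hsum
    linarith
  · have hsum : 1 + F = 0 := by simpa using heq.symm
    have := one_le_maxNorm_of_add_eq_zero (i := 0) (j := 0) (one_apply_eq 0) hsum
    linarith
  · have hdet : (1 + F).det = 0 := by
      rw [← heq, det_mul, det_mul, det_fin_two_of]
      simp
    exact_mod_cast one_div_le_maxNorm_of_det_one_add_eq_zero hdet

/-- Let `(B̃, B)` be one of `(diag(1,0), 0₂)`, `(I₂, 0₂)`, `(I₂, diag(1,0))`.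
If `P ∈ GL₂(ℂ)` and `PᵀBP = B̃ + F`, then `‖F‖ ≥ 1/2` in the entrywise maximum norm. -/
theorem rank_drop_perturbation_lower_bound
    (B' B : Matrix (Fin 2) (Fin 2) ℂ)
    (h : (B' = !![(1 : ℂ), 0; 0, 0] ∧ B = 0) ∨
         (B' = (1 : Matrix (Fin 2) (Fin 2) ℂ) ∧ B = 0) ∨
         (B' = (1 : Matrix (Fin 2) (Fin 2) ℂ) ∧ B = !![(1 : ℂ), 0; 0, 0]))
    (P F : Matrix (Fin 2) (Fin 2) ℂ) (hP : IsUnit P)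
    (heq : Pᵀ * B * P = B' + F) :
    (1 : ℝ) / 2 ≤ maxNorm F :=
  rank_drop_perturbation_lower_bound_general B' B h P F heq
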